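/- arXiv:1706.02197 — 7 statements merged into one kernel-verified Lean document; each statement's English description precedes it below -/
import Mathlib

section
/- Let f, g : ℕ → ℝ be sequences with f(n) ≥ 0 and g(n) ≥ 0 for all n, satisfying f(n+1) ≤ f(n)² + g(n+1) for all n ≥ 0, f(0) ≤ 1/9, and ∑_{n=1}^∞ g(n) ≤ 1/81. Then ∑_{n=1}^∞ (f(n) + g(n)) ≤ 5/81. -/
open Finset

theorem forall_le_of_le_sq_add {f g : ℕ → ℝ} {ε δ : ℝ} (hf : ∀ n, 0 ≤ f n)
    (hrec : ∀ n, f (n + 1) ≤ f n ^ 2 + g (n + 1)) (hg : ∀ n, g (n + 1) ≤ δ)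
    (hf0 : f 0 ≤ ε) (hεδ : ε ^ 2 + δ ≤ ε) : ∀ n, f n ≤ ε
  | 0 => hf0
  | n + 1 =>
    calc f (n + 1) ≤ f n ^ 2 + g (n + 1) := hrec n
      _ ≤ ε ^ 2 + δ :=
        add_le_add (pow_le_pow_left₀ (hf n) (forall_le_of_le_sq_add hf hrec hg hf0 hεδ n) 2) (hg n)
      _ ≤ ε := hεδ

theorem one_sub_mul_sum_range_succ_le {a b : ℕ → ℝ} {c B : ℝ} (ha : ∀ n, 0 ≤ a n) (hc : 0 ≤ c)
    (hrec : ∀ n, a (n + 1) ≤ c * a n + b (n + 1))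
    (hB : ∀ N, ∑ n ∈ range N, b (n + 1) ≤ B) (N : ℕ) :
    (1 - c) * ∑ n ∈ range N, a (n + 1) ≤ c * a 0 + B := by
  have hstep :
      ∑ n ∈ range N, a (n + 1) ≤ c * ∑ n ∈ range N, a n + ∑ n ∈ range N, b (n + 1) := by
    rw [mul_sum, ← sum_add_distrib]
    exact sum_le_sum fun n _ => hrec n
  have hshift : ∑ n ∈ range N, a n ≤ a 0 + ∑ n ∈ range N, a (n + 1) :=
    calc ∑ n ∈ range N, a n ≤ ∑ n ∈ range (N + 1), a n :=
          sum_le_sum_of_subset_of_nonneg (range_subset_range.2 N.le_succ) fun n _ _ => ha n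
      _ = a 0 + ∑ n ∈ range N, a (n + 1) := by rw [sum_range_succ', add_comm]
  nlinarith [hB N, mul_le_mul_of_nonneg_left hshift hc]

theorem summable_and_one_sub_mul_tsum_le {a b : ℕ → ℝ} {c : ℝ} (ha : ∀ n, 0 ≤ a n)
    (hb : ∀ n, 0 ≤ b n) (hc₀ : 0 ≤ c) (hc₁ : c < 1)
    (hrec : ∀ n, a (n + 1) ≤ c * a n + b (n + 1)) (hbsum : Summable fun n => b (n + 1)) :
    (Summable fun n => a (n + 1)) ∧
      (1 - c) * ∑' n, a (n + 1) ≤ c * a 0 + ∑' n, b (n + 1) := by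
  have hpartial := one_sub_mul_sum_range_succ_le ha hc₀ hrec
    fun N => hbsum.sum_le_tsum _ fun n _ => hb (n + 1)
  have hc : 0 < 1 - c := sub_pos.2 hc₁
  have hle : ∀ N, ∑ n ∈ range N, a (n + 1) ≤ (c * a 0 + ∑' n, b (n + 1)) / (1 - c) :=
    fun N => (le_div_iff₀' hc).2 (hpartial N)
  have hasum : Summable fun n => a (n + 1) := summable_of_sum_range_le (fun n => ha (n + 1)) hle
  exact ⟨hasum, (le_div_iff₀' hc).1 (hasum.tsum_le_of_sum_range_le hle)⟩

/-- If `f, g : ℕ → ℝ` are nonnegative, `f(n+1) ≤ f(n)² + g(n+1)` for all `n`,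
`f(0) ≤ 1/9` and `∑_{n≥1} g(n) ≤ 1/81`, then `∑_{n≥1} (f(n) + g(n)) ≤ 5/81`. -/
theorem multiscale_sum_bound (f g : ℕ → ℝ)
    (hf : ∀ n, 0 ≤ f n) (hg : ∀ n, 0 ≤ g n)
    (hrec : ∀ n, f (n + 1) ≤ f n ^ 2 + g (n + 1))
    (hf0 : f 0 ≤ 1 / 9)
    (hgsum : Summable (fun n : ℕ => g (n + 1)))
    (hgle : ∑' n : ℕ, g (n + 1) ≤ 1 / 81) :
    Summable (fun n : ℕ => f (n + 1) + g (n + 1)) ∧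
      ∑' n : ℕ, (f (n + 1) + g (n + 1)) ≤ 5 / 81 := by
  have hg_le : ∀ n, g (n + 1) ≤ 1 / 81 := fun n =>
    (hgsum.le_tsum n fun m _ => hg (m + 1)).trans hgle
  have hf_le := forall_le_of_le_sq_add hf hrec hg_le hf0 (by norm_num)
  -- Once `f ≤ 1/9`, the quadratic recursion is dominated by a contracting linear one.
  have hlin : ∀ n, f (n + 1) ≤ 1 / 9 * f n + g (n + 1) := fun n =>
    (hrec n).trans (by nlinarith [hf n, hf_le n])
  obtain ⟨hfsum, hftsum⟩ :=
    summable_and_one_sub_mul_tsum_le hf hg (by norm_num) (by norm_num) hlin hgsum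
  refine ⟨hfsum.add hgsum, ?_⟩
  rw [hfsum.tsum_add hgsum]
  -- `(8/9) ∑ f ≤ 1/81 + 1/81` gives `∑ f ≤ 1/36`, and `1/36 + 1/81 < 5/81`.
  linarith
end

section
/- Let f, g : ℕ → ℝ be sequences with f(n) ≥ 0 and g(n) ≥ 0 for all n, satisfying f(n+1) ≤ f(n)² + g(n+1) for all n ≥ 0, f(0) ≤ 1/9, and ∑_{n=1}^∞ g(n) ≤ 1/81. Then for every n ≥ 1, f(n) ≤ 9^{-(n+1)} + ∑_{k=1}^{n} 9^{-(n-k)} · g(k). -/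
/-! With `r = 1/9`: once `f n ≤ r` the quadratic term is absorbed, `f n ^ 2 ≤ r * f n`, so the
recursion becomes the linear one `f (n + 1) ≤ r * f n + g (n + 1)`, whose iterate is the claimed
geometric bound. That bound is itself at most `r ^ 2 + r ^ 2 ≤ r` when `r ≤ 1/2` and the total
mass of `g` is at most `r ^ 2`, so the hypothesis `f n ≤ r` propagates along the induction. -/

open Finset

def discountedSum (r : ℝ) (g : ℕ → ℝ) (n : ℕ) : ℝ :=
  ∑ k ∈ Icc 1 n, r ^ (n - k) * g k

section discountedSum

variable {r : ℝ} {g : ℕ → ℝ}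

theorem discountedSum_one : discountedSum r g 1 = g 1 := by
  simp [discountedSum]

theorem discountedSum_succ (n : ℕ) :
    discountedSum r g (n + 1) = r * discountedSum r g n + g (n + 1) := by
  rw [discountedSum, sum_Icc_succ_top (Nat.le_add_left 1 n), discountedSum, mul_sum,
    Nat.sub_self, pow_zero, one_mul]
  congr 1
  refine sum_congr rfl fun k hk => ?_
  rw [Nat.sub_add_comm (mem_Icc.mp hk).2, pow_succ]
  ring

theorem discountedSum_le_sum (hr₀ : 0 ≤ r) (hr₁ : r ≤ 1) (hg : ∀ n, 0 ≤ g n) (n : ℕ) :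
    discountedSum r g n ≤ ∑ k ∈ Icc 1 n, g k :=
  sum_le_sum fun k _ => mul_le_of_le_one_left (hg k) (pow_le_one₀ hr₀ hr₁)

end discountedSum

theorem sum_Icc_one_le_tsum_succ {g : ℕ → ℝ} (hg : ∀ n, 0 ≤ g n)
    (hgsum : Summable fun n => g (n + 1)) (n : ℕ) :
    ∑ k ∈ Icc 1 n, g k ≤ ∑' k, g (k + 1) := by
  rw [← Ico_add_one_right_eq_Icc, sum_Ico_eq_sum_range, Nat.add_sub_cancel]
  simpa only [add_comm 1] using hgsum.sum_le_tsum (range n) fun k _ => hg (k + 1)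

theorem le_pow_add_discountedSum_of_le_sq_add {r : ℝ} {f g : ℕ → ℝ}
    (hr₀ : 0 ≤ r) (hr : r ≤ 1 / 2) (hf : ∀ n, 0 ≤ f n) (hg : ∀ n, 0 ≤ g n)
    (hrec : ∀ n, f (n + 1) ≤ f n ^ 2 + g (n + 1)) (hf0 : f 0 ≤ r)
    (hmass : ∀ n, ∑ k ∈ Icc 1 n, g k ≤ r ^ 2) :
    ∀ n, 1 ≤ n → f n ≤ r ^ (n + 1) + discountedSum r g n := by
  have hS : ∀ n, discountedSum r g n ≤ r ^ 2 := fun n =>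
    (discountedSum_le_sum hr₀ (by linarith) hg n).trans (hmass n)
  intro n hn
  induction n, hn using Nat.le_induction with
  | base =>
    have hsq : f 0 ^ 2 ≤ r ^ 2 := pow_le_pow_left₀ (hf 0) hf0 2
    exact (hrec 0).trans (by rw [discountedSum_one]; gcongr)
  | succ n hn ih =>
    have hpow : r ^ (n + 1) ≤ r ^ 2 := pow_le_pow_of_le_one hr₀ (by linarith) (by omega)
    have hfn : f n ≤ r := by nlinarith [hS n]
    calc f (n + 1) ≤ f n ^ 2 + g (n + 1) := hrec n
      _ ≤ r * f n + g (n + 1) := by nlinarith [hf n]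
      _ ≤ r * (r ^ (n + 1) + discountedSum r g n) + g (n + 1) := by gcongr
      _ = r ^ (n + 1 + 1) + discountedSum r g (n + 1) := by
        rw [discountedSum_succ]
        ring

/-- If `f, g : ℕ → ℝ` are nonnegative, `f(n+1) ≤ f(n)² + g(n+1)` for all `n`,
`f(0) ≤ 1/9` and `∑_{n≥1} g(n) ≤ 1/81`, then for every `n ≥ 1`,
`f(n) ≤ 9^{-(n+1)} + ∑_{k=1}^{n} 9^{-(n-k)} · g(k)`. -/
theorem multiscale_iterated_bound (f g : ℕ → ℝ)
    (hf : ∀ n, 0 ≤ f n) (hg : ∀ n, 0 ≤ g n)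
    (hrec : ∀ n, f (n + 1) ≤ f n ^ 2 + g (n + 1))
    (hf0 : f 0 ≤ 1 / 9)
    (hgsum : Summable (fun n : ℕ => g (n + 1)))
    (hgle : ∑' n : ℕ, g (n + 1) ≤ 1 / 81) :
    ∀ n : ℕ, 1 ≤ n →
      f n ≤ ((9 : ℝ) ^ (n + 1))⁻¹ + ∑ k ∈ Finset.Icc 1 n, ((9 : ℝ) ^ (n - k))⁻¹ * g k := by
  have hmass : ∀ n, ∑ k ∈ Icc 1 n, g k ≤ (9⁻¹ : ℝ) ^ 2 := fun n =>
    (sum_Icc_one_le_tsum_succ hg hgsum n).trans (by norm_num [hgle])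
  intro n hn
  simpa only [discountedSum, inv_pow] using
    le_pow_add_discountedSum_of_le_sq_add (by norm_num) (by norm_num) hf hg hrec
      (by norm_num [hf0]) hmass n hn
end

section
/- Let d ≥ 2 and suppose A ⊆ ℝ^d is closed, connected, and unbounded, and that ℝ^d \ A has an unbounded connected component. Then the topological frontier (boundary) ∂A of A contains an unbounded connected subset; equivalently, ∂A has an unbounded connected component. -/
/-!
The Euclidean space is unicoherent: if it is the union of two closed connected sets `P` and `Q`,
then `P ∩ Q` is connected. Indeed, a separation of `P ∩ Q` gives, by Urysohn's lemma, a function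
`φ` that is `0` on one part and `1` on the other; the map equal to `exp (iπφ)` on `P` and to
`exp (-iπφ)` on `Q` is continuous, so it has a continuous logarithm `g` on the simply connected
space, and then `g - iπφ` and `g + iπφ` are constant on `P` and on `Q` respectively, which is
impossible.

Apply this to `P = closure U` and `Q = Uᶜ`, where `U` is the unbounded component of `Aᶜ`:
`Uᶜ` is connected because `A` is and every other component of `Aᶜ` has a frontier point in `A`,
and `P ∩ Q = frontier U ⊆ frontier A`. Finally, `frontier U` is unbounded, since outside a large
ball, a connected region when `d ≥ 2`, there are points both of `U` and of `A`.
-/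

open Bornology Metric Set

section Unicoherence

variable {X : Type*} [TopologicalSpace X]

theorem ContinuousMap.exists_exp_comp_eq [SimplyConnectedSpace X] [LocallyPathConnectedSpace X]
    (f : C(X, ℂ)) (hf : ∀ x, f x ≠ 0) : ∃ g : C(X, ℂ), Complex.exp ∘ g = f := by
  obtain ⟨x₀⟩ : Nonempty X := inferInstance
  obtain ⟨g, -, hg⟩ := (Complex.isCoveringMapOn_exp.existsUnique_continuousMap_lifts f
    (Complex.exp_log (hf x₀)) hf).exists
  exact ⟨g, hg⟩

theorem IsPreconnected.eq_of_exp_eq_one {S : Set X} (hS : IsPreconnected S) {h : X → ℂ}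
    (hc : ContinuousOn h S) (h1 : ∀ x ∈ S, Complex.exp (h x) = 1) {x y : X} (hx : x ∈ S)
    (hy : y ∈ S) : h x = h y := by
  refine hS.constant_of_mapsTo (T := AddSubgroup.zmultiples (2 * Real.pi * Complex.I))
    (SetLike.isDiscrete_iff_discreteTopology.2 inferInstance) hc (fun z hz => ?_) hx hy
  obtain ⟨n, hn⟩ := Complex.exp_eq_one_iff.1 (h1 z hz)
  exact AddSubgroup.mem_zmultiples_iff.2 ⟨n, by rw [hn, zsmul_eq_mul]⟩

theorem exists_continuous_exp_sub_eq_one_and_exp_add_eq_one [SimplyConnectedSpace X]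
    [LocallyPathConnectedSpace X] {P Q : Set X} (hPc : IsClosed P) (hQc : IsClosed Q)
    (hPQ : P ∪ Q = univ) {θ : X → ℂ} (hθ : Continuous θ)
    (hθPQ : ∀ x ∈ P ∩ Q, Complex.exp (θ x) = Complex.exp (-θ x)) :
    ∃ g : C(X, ℂ), (∀ x ∈ P, Complex.exp (g x - θ x) = 1) ∧
      ∀ x ∈ Q, Complex.exp (g x + θ x) = 1 := by
  classical
  have hfrontier : frontier P ⊆ P ∩ Q := fun x hx =>
    ⟨hPc.frontier_subset hx, closure_minimal (compl_subset_iff_union.2 hPQ) hQc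
      ((frontier_compl P ▸ frontier_subset_closure) hx)⟩
  let F : C(X, ℂ) := ⟨P.piecewise (Complex.exp ∘ θ) (Complex.exp ∘ (-θ)),
    Continuous.piecewise (fun x hx => hθPQ x (hfrontier hx)) (by fun_prop) (by fun_prop)⟩
  have hFP (x : X) (hx : x ∈ P) : F x = Complex.exp (θ x) := by simp [F, hx]
  have hFQ (x : X) (hx : x ∈ Q) : F x = Complex.exp (-θ x) := by
    by_cases hxP : x ∈ P
    · rw [hFP x hxP, hθPQ x ⟨hxP, hx⟩]
    · simp [F, hxP]
  obtain ⟨g, hg⟩ := F.exists_exp_comp_eq fun x => by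
    by_cases hx : x ∈ P <;> simp [F, hx, Complex.exp_ne_zero]
  replace hg (x : X) : Complex.exp (g x) = F x := congrFun hg x
  refine ⟨g, fun x hx => ?_, fun x hx => ?_⟩
  · rw [Complex.exp_sub, hg, hFP x hx, div_self (Complex.exp_ne_zero _)]
  · rw [Complex.exp_add, hg, hFQ x hx, ← Complex.exp_add, neg_add_cancel,
      Complex.exp_zero]

theorem isPreconnected_inter_of_union_eq_univ [NormalSpace X] [SimplyConnectedSpace X]
    [LocallyPathConnectedSpace X] {P Q : Set X} (hPc : IsClosed P) (hQc : IsClosed Q)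
    (hP : IsPreconnected P) (hQ : IsPreconnected Q) (hPQ : P ∪ Q = univ) :
    IsPreconnected (P ∩ Q) := by
  rw [isPreconnected_iff_subset_of_fully_disjoint_closed (hPc.inter hQc)]
  intro u v hu hv huv hdisj
  by_contra! hsplit
  obtain ⟨q, hqPQ, hqu⟩ := not_subset.1 hsplit.1
  obtain ⟨p, hpPQ, hpv⟩ := not_subset.1 hsplit.2
  obtain ⟨φ, hφu, hφv, -⟩ := exists_continuous_zero_one_of_isClosed hu hv hdisj
  set θ : X → ℂ := fun x => Real.pi * φ x * Complex.I
  have hθ : Continuous θ := by fun_prop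
  have hθp : θ p = 0 := by simp [θ, hφu ((huv hpPQ).resolve_right hpv)]
  have hθq : θ q = Real.pi * Complex.I := by simp [θ, hφv ((huv hqPQ).resolve_left hqu)]
  have hθPQ : ∀ x ∈ P ∩ Q, Complex.exp (θ x) = Complex.exp (-θ x) := by
    intro x hx
    rcases huv hx with hxu | hxv
    · simp [θ, hφu hxu]
    · simp [θ, hφv hxv, Complex.exp_neg, Complex.exp_pi_mul_I]
  obtain ⟨g, hgP, hgQ⟩ :=
    exists_continuous_exp_sub_eq_one_and_exp_add_eq_one hPc hQc hPQ hθ hθPQ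
  have hP_const : g p - θ p = g q - θ q := hP.eq_of_exp_eq_one (h := fun x => g x - θ x)
    (g.continuous.sub hθ).continuousOn hgP hpPQ.1 hqPQ.1
  have hQ_const : g p + θ p = g q + θ q := hQ.eq_of_exp_eq_one (h := fun x => g x + θ x)
    (g.continuous.add hθ).continuousOn hgQ hpPQ.2 hqPQ.2
  have : (2 * Real.pi * Complex.I : ℂ) = 0 := by
    rw [hθp, hθq] at hP_const hQ_const
    linear_combination hP_const - hQ_const
  simp [Real.pi_ne_zero] at this

end Unicoherence

section Components

variable {X : Type*} [TopologicalSpace X] [LocallyConnectedSpace X]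

theorem IsOpen.frontier_connectedComponentIn_subset {s : Set X} (hs : IsOpen s) (x : X) :
    frontier (connectedComponentIn s x) ⊆ frontier s := by
  intro y hy
  rw [hs.connectedComponentIn.frontier_eq] at hy
  rw [hs.frontier_eq]
  refine ⟨closure_mono (connectedComponentIn_subset s x) hy.1, fun hys => hy.2 ?_⟩
  obtain ⟨w, hwy, hwx⟩ := mem_closure_iff.1 hy.1 _ hs.connectedComponentIn
    (mem_connectedComponentIn hys)
  rw [connectedComponentIn_eq hwx, ← connectedComponentIn_eq hwy]
  exact mem_connectedComponentIn hys

theorem isPreconnected_compl_connectedComponentIn_compl [PreconnectedSpace X] {A : Set X}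
    (hA : IsClosed A) (hAc : IsConnected A) (x : X) :
    IsPreconnected (connectedComponentIn Aᶜ x)ᶜ := by
  obtain ⟨a, ha⟩ := hAc.nonempty
  have hAU : A ⊆ (connectedComponentIn Aᶜ x)ᶜ := fun z hzA hzU =>
    connectedComponentIn_subset _ _ hzU hzA
  refine isPreconnected_of_forall a fun z hzU => ?_
  by_cases hzA : z ∈ A
  · exact ⟨A, hAU, ha, hzA, hAc.isPreconnected⟩
  have hzD : z ∈ connectedComponentIn Aᶜ z := mem_connectedComponentIn hzA
  have hDU : Disjoint (connectedComponentIn Aᶜ z) (connectedComponentIn Aᶜ x) :=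
    disjoint_left.2 fun w hwD hwU => hzU <| by
      rw [connectedComponentIn_eq hwU, ← connectedComponentIn_eq hwD]
      exact hzD
  obtain ⟨y, hy⟩ : (frontier (connectedComponentIn Aᶜ z)).Nonempty := nonempty_frontier_iff.2
    ⟨⟨z, hzD⟩, fun hD => connectedComponentIn_subset Aᶜ z (hD ▸ mem_univ a) ha⟩
  have hyA : y ∈ A := hA.frontier_subset <|
    frontier_compl A ▸ hA.isOpen_compl.frontier_connectedComponentIn_subset z hy
  refine ⟨A ∪ closure (connectedComponentIn Aᶜ z), union_subset hAU ?_, Or.inl ha,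
    Or.inr (subset_closure hzD), hAc.isPreconnected.union y hyA (frontier_subset_closure hy)
      isPreconnected_connectedComponentIn.closure⟩
  exact (hDU.closure_left hA.isOpen_compl.connectedComponentIn).subset_compl_right

end Components

section NormedSpace

variable {E : Type*} [NormedAddCommGroup E] [NormedSpace ℝ E]

theorem compl_closedBall_eq_image_smul_sphere (x : E) {r : ℝ} (hr : 0 ≤ r) :
    (closedBall x r)ᶜ = (fun p : E × ℝ => x + p.2 • p.1) '' (sphere 0 1 ×ˢ Ioi r) := by
  ext y
  simp only [mem_compl_iff, mem_closedBall, not_le, mem_image, mem_prod,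
    mem_sphere_zero_iff_norm, mem_Ioi, Prod.exists]
  constructor
  · intro hy
    have hy0 : ‖y - x‖ ≠ 0 := by rw [← dist_eq_norm]; linarith
    refine ⟨‖y - x‖⁻¹ • (y - x), ‖y - x‖, ⟨?_, by rwa [← dist_eq_norm]⟩, ?_⟩
    · rw [norm_smul, norm_inv, norm_norm, inv_mul_cancel₀ hy0]
    · rw [smul_smul, mul_inv_cancel₀ hy0, one_smul, add_sub_cancel]
  · rintro ⟨v, t, ⟨hv, ht⟩, rfl⟩
    rwa [dist_eq_norm, add_sub_cancel_left, norm_smul, hv, mul_one,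
      Real.norm_of_nonneg (hr.trans ht.le)]

theorem isPreconnected_compl_closedBall (hrank : 1 < Module.rank ℝ E) (x : E) (r : ℝ) :
    IsPreconnected (closedBall x r)ᶜ := by
  rcases lt_or_ge r 0 with hr | hr
  · rw [closedBall_eq_empty.2 hr, compl_empty]
    exact isPreconnected_univ
  rw [compl_closedBall_eq_image_smul_sphere x hr]
  exact ((isPreconnected_sphere hrank 0 1).prod isPreconnected_Ioi).image _
    (Continuous.continuousOn (by fun_prop))

theorem isBounded_or_isBounded_compl_of_isBounded_frontier (hrank : 1 < Module.rank ℝ E)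
    {s : Set E} (hs : IsBounded (frontier s)) : IsBounded s ∨ IsBounded sᶜ := by
  obtain ⟨r, hr⟩ := hs.subset_closedBall 0
  by_contra! hunb
  obtain ⟨a, has, har⟩ := not_subset.1 fun h => hunb.1 (isBounded_closedBall.subset h)
  obtain ⟨b, hbs, hbr⟩ := not_subset.1 fun h => hunb.2 (isBounded_closedBall.subset h)
  have hcover : (closedBall (0 : E) r)ᶜ ⊆ interior s ∪ interior sᶜ := by
    rw [← compl_frontier_eq_union_interior]
    exact compl_subset_compl.2 hr
  obtain ⟨z, -, hzs, hzsc⟩ := isPreconnected_compl_closedBall hrank 0 r _ _ isOpen_interior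
    isOpen_interior hcover ⟨a, har, (hcover har).resolve_right fun ha => interior_subset ha has⟩
    ⟨b, hbr, (hcover hbr).resolve_left fun hb => hbs (interior_subset hb)⟩
  exact interior_subset hzsc (interior_subset hzs)

end NormedSpace

/-- If `A ⊆ ℝ^d` (`d ≥ 2`) is closed, connected and unbounded, and the complement of `A`
has an unbounded connected component, then the frontier of `A` contains an unbounded
connected subset. -/
theorem frontier_has_unbounded_component
    (d : ℕ) (hd : 2 ≤ d) (A : Set (EuclideanSpace ℝ (Fin d)))
    (hAclosed : IsClosed A) (hAconn : IsConnected A) (hAunb : ¬ IsBounded A)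
    (hcomp : ∃ x ∈ Aᶜ, ¬ IsBounded (connectedComponentIn Aᶜ x)) :
    ∃ C : Set (EuclideanSpace ℝ (Fin d)),
      C ⊆ frontier A ∧ IsConnected C ∧ ¬ IsBounded C := by
  obtain ⟨x, -, hU⟩ := hcomp
  set U := connectedComponentIn Aᶜ x
  have hUopen : IsOpen U := hAclosed.isOpen_compl.connectedComponentIn
  have hrank : 1 < Module.rank ℝ (EuclideanSpace ℝ (Fin d)) := by
    rw [← Module.finrank_eq_rank, finrank_euclideanSpace_fin]
    exact_mod_cast hd
  have hAU : A ⊆ Uᶜ := fun a ha haU => connectedComponentIn_subset _ _ haU ha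
  have hunb : ¬ IsBounded (frontier U) := fun hb =>
    (isBounded_or_isBounded_compl_of_isBounded_frontier hrank hb).elim hU
      fun hUc => hAunb (hUc.subset hAU)
  have hfrontier : frontier U = closure U ∩ Uᶜ := by
    rw [frontier_eq_closure_inter_closure, hUopen.isClosed_compl.closure_eq]
  have hsub : frontier U ⊆ frontier A :=
    frontier_compl A ▸ hAclosed.isOpen_compl.frontier_connectedComponentIn_subset x
  refine ⟨frontier U, hsub, ⟨nonempty_of_not_isBounded hunb, ?_⟩, hunb⟩
  rw [hfrontier]
  exact isPreconnected_inter_of_union_eq_univ isClosed_closure hUopen.isClosed_compl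
    isPreconnected_connectedComponentIn.closure
    (isPreconnected_compl_connectedComponentIn_compl hAclosed hAconn x)
    (compl_subset_iff_union.1 (compl_subset_compl.2 subset_closure))
end

section
/- Let d ≥ 1, let ξ ⊆ ℝ^d and L ⊆ ℝ^d be arbitrary subsets, and let A be the union of L together with all connected components of ξ that intersect L. Then the frontier ∂A of A is disjoint from the interior of ξ: ∂A ∩ int(ξ) = ∅. -/
open Set

variable {X : Type*} [TopologicalSpace X]

def cluster (ξ L : Set X) : Set X :=
  L ∪ ⋃ x ∈ {x | x ∈ ξ ∧ (connectedComponentIn ξ x ∩ L).Nonempty}, connectedComponentIn ξ x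

theorem mem_cluster_iff {ξ L : Set X} {w : X} :
    w ∈ cluster ξ L ↔ w ∈ L ∨ w ∈ ξ ∧ (connectedComponentIn ξ w ∩ L).Nonempty := by
  simp only [cluster, mem_union, mem_iUnion, mem_ofPred_eq, exists_prop]
  refine or_congr_right ⟨?_, fun hw => ⟨w, hw, mem_connectedComponentIn hw.1⟩⟩
  rintro ⟨x, ⟨hxξ, hxL⟩, hwx⟩
  rw [← connectedComponentIn_eq hwx]
  exact ⟨connectedComponentIn_subset _ _ hwx, hxL⟩

theorem connectedComponentIn_inter_nonempty_of_mem_cluster {ξ L : Set X} {z : X}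
    (hz : z ∈ cluster ξ L) (hzξ : z ∈ ξ) : (connectedComponentIn ξ z ∩ L).Nonempty := by
  rcases mem_cluster_iff.mp hz with hzL | ⟨-, hne⟩
  · exact ⟨z, mem_connectedComponentIn hzξ, hzL⟩
  · exact hne

theorem subset_cluster_of_isPreconnected {ξ L U : Set X} (hU : IsPreconnected U) (hUξ : U ⊆ ξ)
    (hmeet : (U ∩ cluster ξ L).Nonempty) : U ⊆ cluster ξ L := by
  obtain ⟨z, hzU, hz⟩ := hmeet
  intro w hw
  have hcomp : connectedComponentIn ξ w = connectedComponentIn ξ z :=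
    connectedComponentIn_eq (hU.subset_connectedComponentIn hw hUξ hzU)
  refine mem_cluster_iff.mpr (Or.inr ⟨hUξ hw, ?_⟩)
  rw [hcomp]
  exact connectedComponentIn_inter_nonempty_of_mem_cluster hz (hUξ hzU)

/-- A point of `interior ξ` in the closure of the cluster has an open preconnected neighbourhood
inside `ξ` (its component in `interior ξ`), which then lies in the cluster. -/
theorem frontier_cluster_inter_interior_eq_empty [LocallyConnectedSpace X] (ξ L : Set X) :
    frontier (cluster ξ L) ∩ interior ξ = ∅ := by
  refine eq_empty_iff_forall_notMem.mpr fun y ⟨hyF, hyI⟩ => hyF.2 ?_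
  set U := connectedComponentIn (interior ξ) y
  have hUopen : IsOpen U := isOpen_interior.connectedComponentIn
  have hyU : y ∈ U := mem_connectedComponentIn hyI
  have hUξ : U ⊆ ξ := (connectedComponentIn_subset _ _).trans interior_subset
  have hUsub : U ⊆ cluster ξ L :=
    subset_cluster_of_isPreconnected isPreconnected_connectedComponentIn hUξ
      (mem_closure_iff.mp hyF.1 U hUopen hyU)
  exact interior_maximal hUsub hUopen hyU

theorem frontier_cluster_disjoint_interior_general
    (d : ℕ) (ξ L : Set (EuclideanSpace ℝ (Fin d)))
    (A : Set (EuclideanSpace ℝ (Fin d)))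
    (hA : A = L ∪ ⋃ x ∈ {x | x ∈ ξ ∧ (connectedComponentIn ξ x ∩ L).Nonempty},
      connectedComponentIn ξ x) :
    frontier A ∩ interior ξ = ∅ := by
  rw [show A = cluster ξ L from hA]
  exact frontier_cluster_inter_interior_eq_empty ξ L

/-- Let `ξ, L ⊆ ℝ^d` (`d ≥ 1`) and let `A` be the union of `L` together with all connected
components of `ξ` that intersect `L`. Then the frontier of `A` is disjoint from the
interior of `ξ`. -/
theorem frontier_cluster_disjoint_interior
    (d : ℕ) (hd : 1 ≤ d) (ξ L : Set (EuclideanSpace ℝ (Fin d)))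
    (A : Set (EuclideanSpace ℝ (Fin d)))
    (hA : A = L ∪ ⋃ x ∈ {x | x ∈ ξ ∧ (connectedComponentIn ξ x ∩ L).Nonempty},
      connectedComponentIn ξ x) :
    frontier A ∩ interior ξ = ∅ :=
  frontier_cluster_disjoint_interior_general d ξ L A hA
end

section
/- Let a₁ < a₂ and b₁ < b₂ be real numbers and let R = [a₁,a₂] × [b₁,b₂] ⊆ ℝ². Let γ₁, γ₂ : [0,1] → ℝ² be continuous maps with ranges contained in R, such that γ₁(0) lies on the left edge {a₁} × [b₁,b₂], γ₁(1) lies on the right edge {a₂} × [b₁,b₂], γ₂(0) lies on the bottom edge [a₁,a₂] × {b₁}, and γ₂(1) lies on the top edge [a₁,a₂] × {b₂}. Then the ranges of γ₁ and γ₂ intersect: range(γ₁) ∩ range(γ₂) ≠ ∅. -/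
/-!
Put `f(s, t) = γ₁(s) - γ₂(t)` on the square `[0,1]²`, viewed in `ℂ`. Along the four edges `f`
lies in the closed half-planes `re ≤ 0`, `im ≥ 0`, `re ≥ 0`, `im ≤ 0` respectively. If `f` never
vanished, the square being simply connected, `f = exp L` with `L` continuous, so `θ = im L` is a
continuous angle of `f` on the whole square. Confined to a closed half-plane, the angle cannot
increase from one corner to the next going around the boundary; since it comes back to its
initial value, it is the same at all four corners, and `f(0, 0)` would lie on both axes.
-/

open Real unitInterval

theorem Continuous.le_of_sin_nonneg {X : Type*} [TopologicalSpace X] [PreconnectedSpace X]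
    {θ : X → ℝ} (hθ : Continuous θ) (hsin : ∀ z, 0 ≤ sin (θ z)) {x y : X}
    (hx : cos (θ x) ≤ 0) (hy : 0 ≤ cos (θ y)) : θ y ≤ θ x := by
  -- `θ` cannot cross a value `≡ 3π/2 (mod 2π)`, so `θ x` and `θ y` share a window of length `2π`
  by_contra! hxy
  set k : ℤ := toIocDiv two_pi_pos (-(π / 2)) (θ x)
  have hwin := toIocMod_mem_Ioc two_pi_pos (-(π / 2)) (θ x)
  rw [← self_sub_toIocDiv_zsmul, zsmul_eq_mul] at hwin
  by_cases hc : k * (2 * π) + (π / 2 + π) ≤ θ y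
  · obtain ⟨z, hz⟩ := intermediate_value_univ x y hθ ⟨by linarith [hwin.2], hc⟩
    have := hsin z
    rw [hz, add_comm, sin_add_int_mul_two_pi, sin_add_pi, sin_pi_div_two] at this
    linarith
  · have hx' : π / 2 ≤ θ x - k * (2 * π) := by
      by_contra! h
      have := cos_pos_of_mem_Ioo ⟨hwin.1, h⟩
      rw [cos_sub_int_mul_two_pi] at this
      linarith
    have hy' : θ y - k * (2 * π) ≤ π / 2 := by
      by_contra! h
      have := cos_neg_of_pi_div_two_lt_of_lt h (by linarith)
      rw [cos_sub_int_mul_two_pi] at this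
      linarith
    linarith

instance : ContractibleSpace I :=
  (convex_Icc (0 : ℝ) 1).contractibleSpace ⟨0, unitInterval.zero_mem⟩

instance : LocallyPathConnectedSpace I := (convex_Icc (0 : ℝ) 1).locallyPathConnectedSpace

theorem ContinuousMap.exists_exp_eq {A : Type*} [TopologicalSpace A] [SimplyConnectedSpace A]
    [LocallyPathConnectedSpace A] (f : C(A, ℂ)) (hf : ∀ a, f a ≠ 0) :
    ∃ L : C(A, ℂ), ∀ a, Complex.exp (L a) = f a := by
  let g : C(A, {z : ℂ // z ≠ 0}) := ⟨fun a ↦ ⟨f a, hf a⟩, by fun_prop⟩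
  obtain ⟨a₀⟩ : Nonempty A := inferInstance
  obtain ⟨L, -, hL⟩ := (Complex.isCoveringMap_exp.existsUnique_continuousMap_lifts g a₀
    (Complex.log (f a₀)) (Subtype.ext (Complex.exp_log (hf a₀)))).exists
  exact ⟨L, fun a ↦ congrArg Subtype.val (congrFun hL a)⟩

theorem poincare_miranda_square (f : C(I × I, ℂ))
    (hleft : ∀ t, (f (0, t)).re ≤ 0) (hright : ∀ t, 0 ≤ (f (1, t)).re)
    (hbot : ∀ s, 0 ≤ (f (s, 0)).im) (htop : ∀ s, (f (s, 1)).im ≤ 0) :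
    ∃ p, f p = 0 := by
  by_contra! hf
  obtain ⟨L, hL⟩ := f.exists_exp_eq hf
  set θ : I × I → ℝ := fun p ↦ (L p).im
  have hθ : Continuous θ := Complex.continuous_im.comp L.continuous
  have hre (p) : (f p).re = Real.exp (L p).re * cos (θ p) := by rw [← hL, Complex.exp_re]
  have him (p) : (f p).im = Real.exp (L p).re * sin (θ p) := by rw [← hL, Complex.exp_im]
  have hcos_left (t) : cos (θ (0, t)) ≤ 0 :=
    nonpos_of_mul_nonpos_right (hre _ ▸ hleft t) (Real.exp_pos _)
  have hcos_right (t) : 0 ≤ cos (θ (1, t)) :=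
    nonneg_of_mul_nonneg_right (hre _ ▸ hright t) (Real.exp_pos _)
  have hsin_bot (s) : 0 ≤ sin (θ (s, 0)) :=
    nonneg_of_mul_nonneg_right (him _ ▸ hbot s) (Real.exp_pos _)
  have hsin_top (s) : sin (θ (s, 1)) ≤ 0 :=
    nonpos_of_mul_nonpos_right (him _ ▸ htop s) (Real.exp_pos _)
  have hbot_edge : θ (1, 0) ≤ θ (0, 0) :=
    (hθ.comp (Continuous.prodMk_left 0)).le_of_sin_nonneg hsin_bot (hcos_left 0) (hcos_right 0)
  -- The other edges reduce to the bottom one after a rotation of the angle by a multiple of `π/2`.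
  have hright_edge : θ (1, 1) + π / 2 ≤ θ (1, 0) + π / 2 :=
    ((hθ.comp (Continuous.prodMk_right 1)).add_const _).le_of_sin_nonneg
      (fun t ↦ by simpa [sin_add_pi_div_two] using hcos_right t)
      (by simpa [cos_add_pi_div_two] using hsin_bot 1)
      (by simpa [cos_add_pi_div_two] using hsin_top 1)
  have htop_edge : θ (0, 1) + π ≤ θ (1, 1) + π :=
    ((hθ.comp (Continuous.prodMk_left 1)).add_const _).le_of_sin_nonneg
      (fun s ↦ by simpa [sin_add_pi] using hsin_top s)
      (by simpa [cos_add_pi] using hcos_right 1)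
      (by simpa [cos_add_pi] using hcos_left 1)
  have hleft_edge : θ (0, 0) - π / 2 ≤ θ (0, 1) - π / 2 :=
    ((hθ.comp (Continuous.prodMk_right 0)).sub continuous_const).le_of_sin_nonneg
      (fun t ↦ by simpa [sin_sub_pi_div_two] using hcos_left t)
      (by simpa [cos_sub_pi_div_two] using hsin_top 0)
      (by simpa [cos_sub_pi_div_two] using hsin_bot 0)
  have hcos : cos (θ (0, 0)) = 0 := by
    have := hcos_right 0
    rw [show θ (1, 0) = θ (0, 0) by linarith] at this
    linarith [hcos_left 0]
  have hsin : sin (θ (0, 0)) = 0 := by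
    have := hsin_top 0
    rw [show θ (0, 1) = θ (0, 0) by linarith] at this
    linarith [hsin_bot 0]
  simpa [hcos, hsin] using sin_sq_add_cos_sq (θ (0, 0))

theorem crossings_intersect_general
    (a₁ a₂ b₁ b₂ : ℝ)
    (γ₁ γ₂ : ℝ → ℝ × ℝ)
    (h₁c : ContinuousOn γ₁ (Set.Icc 0 1)) (h₂c : ContinuousOn γ₂ (Set.Icc 0 1))
    (h₁r : γ₁ '' Set.Icc 0 1 ⊆ Set.Icc (a₁, b₁) (a₂, b₂))
    (h₂r : γ₂ '' Set.Icc 0 1 ⊆ Set.Icc (a₁, b₁) (a₂, b₂))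
    (h₁0 : (γ₁ 0).1 = a₁) (h₁1 : (γ₁ 1).1 = a₂)
    (h₂0 : (γ₂ 0).2 = b₁) (h₂1 : (γ₂ 1).2 = b₂) :
    (γ₁ '' Set.Icc 0 1 ∩ γ₂ '' Set.Icc 0 1).Nonempty := by
  have hγ₁ (s : I) := h₁r ⟨s, s.2, rfl⟩
  have hγ₂ (t : I) := h₂r ⟨t, t.2, rfl⟩
  let F : C(I × I, ℂ) :=
    ⟨fun p ↦ Complex.equivRealProdCLM.symm (γ₁ p.1 - γ₂ p.2),
      Complex.equivRealProdCLM.symm.continuous.comp <|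
        (h₁c.domRestrict.comp continuous_fst).sub (h₂c.domRestrict.comp continuous_snd)⟩
  obtain ⟨⟨s, t⟩, hst⟩ := poincare_miranda_square F
    (fun t ↦ by simpa [F, h₁0] using (hγ₂ t).1.1)
    (fun t ↦ by simpa [F, h₁1] using (hγ₂ t).2.1)
    (fun s ↦ by simpa [F, h₂0] using (hγ₁ s).1.2)
    (fun s ↦ by simpa [F, h₂1] using (hγ₁ s).2.2)
  refine ⟨γ₁ s, ⟨s, s.2, rfl⟩, t, t.2, ?_⟩
  exact (sub_eq_zero.1 ((map_eq_zero_iff _ Complex.equivRealProdCLM.symm.injective).1 hst)).symm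

/-- Planar crossing lemma: a left–right path and a bottom–top path of the rectangle
`[a₁,a₂] × [b₁,b₂]`, both contained in the rectangle, must intersect. -/
theorem crossings_intersect
    (a₁ a₂ b₁ b₂ : ℝ) (ha : a₁ < a₂) (hb : b₁ < b₂)
    (γ₁ γ₂ : ℝ → ℝ × ℝ)
    (h₁c : ContinuousOn γ₁ (Set.Icc 0 1)) (h₂c : ContinuousOn γ₂ (Set.Icc 0 1))
    (h₁r : γ₁ '' Set.Icc 0 1 ⊆ Set.Icc (a₁, b₁) (a₂, b₂))
    (h₂r : γ₂ '' Set.Icc 0 1 ⊆ Set.Icc (a₁, b₁) (a₂, b₂))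
    (h₁0 : (γ₁ 0).1 = a₁) (h₁1 : (γ₁ 1).1 = a₂)
    (h₂0 : (γ₂ 0).2 = b₁) (h₂1 : (γ₂ 1).2 = b₂) :
    (γ₁ '' Set.Icc 0 1 ∩ γ₂ '' Set.Icc 0 1).Nonempty :=
  crossings_intersect_general a₁ a₂ b₁ b₂ γ₁ γ₂ h₁c h₂c h₁r h₂r h₁0 h₁1 h₂0 h₂1
end

section
/- Let n > 0 and for r > 0 write Q(r) = [-r,r]² ⊆ ℝ². Consider the four rectangles R_b = [-3n,3n] × [-3n,-n], R_t = [-3n,3n] × [n,3n], R_l = [-3n,-n] × [-3n,3n], R_r = [n,3n] × [-3n,3n], whose union is the annulus Q(3n) \ interior(Q(n)). Let V ⊆ ℝ². Suppose there exist continuous paths in V ∩ R_b and in V ∩ R_t joining the left edge to the right edge of R_b and R_t respectively, and continuous paths in V ∩ R_l and in V ∩ R_r joining the bottom edge to the top edge of R_l and R_r respectively. Then there is no continuous path γ : [0,1] → ℝ² \ V with γ(0) ∈ Q(n) and γ(1) ∉ Q(3n). -/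
/-!
Suppose `γ` avoids `V`. Stop `γ` when it first reaches the boundary of `Q(3n)`; a symmetry of the
square moves the side it reaches to the top one. After its last visit to the line `y = n`, `γ`
crosses the top rectangle from bottom to top, so it meets the left-right crossing of that
rectangle inside `V`.

Two such crossings `f`, `g` of a rectangle meet because `(s, t) ↦ (f s - g t)`, with its second
coordinate negated, satisfies the sign conditions of the Poincaré–Miranda theorem on the unit
square. That theorem is proved by perturbing to strict signs, labelling a fine grid by the signs
of the map and counting, modulo 2, the edges labelled `{0, 1}` (Sperner's lemma), and passing to
the limit by compactness.
-/

open Set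

namespace Sperner

open Finset

def door (a b : Fin 3) : ZMod 2 :=
  if (a = 0 ∧ b = 1) ∨ (a = 1 ∧ b = 0) then 1 else 0

lemma door_eq_zero_of_ne_zero {a b : Fin 3} (ha : a ≠ 0) (hb : b ≠ 0) : door a b = 0 := by
  revert a b; decide

lemma door_eq_zero_of_ne_one {a b : Fin 3} (ha : a ≠ 1) (hb : b ≠ 1) : door a b = 0 := by
  revert a b; decide

lemma door_eq_sub_of_ne_two {a b : Fin 3} (ha : a ≠ 2) (hb : b ≠ 2) :
    door a b = ((b : ℕ) : ZMod 2) - (a : ℕ) := by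
  revert a b; decide

lemma door_add_door_add_door_eq_zero {x y z c : Fin 3} (hx : x ≠ c) (hy : y ≠ c) (hz : z ≠ c) :
    door x y + door y z + door x z = 0 := by
  revert x y z c; decide

lemma eq_zero_of_ne_one_of_ne_two {a : Fin 3} (h1 : a ≠ 1) (h2 : a ≠ 2) : a = 0 := by
  revert a; decide

lemma eq_one_of_ne_zero_of_ne_two {a : Fin 3} (h0 : a ≠ 0) (h2 : a ≠ 2) : a = 1 := by
  revert a; decide

theorem exists_panchromatic_cell (N : ℕ) (ℓ : ℕ → ℕ → Fin 3)
    (hbot : ∀ i ≤ N, ℓ i 0 ≠ 2) (htop : ∀ i ≤ N, ℓ i N ≠ 0)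
    (hleft : ∀ j ≤ N, ℓ 0 j ≠ 1) (hright : ∀ j ≤ N, ℓ N j ≠ 0) :
    ∃ i < N, ∃ j < N, ∀ c, ∃ a ≤ 1, ∃ b ≤ 1, ℓ (i + a) (j + b) = c := by
  by_contra! hmiss
  let H i j := door (ℓ i j) (ℓ (i + 1) j)
  let W i j := door (ℓ i j) (ℓ i (j + 1))
  -- the diagonal cuts each cell into two triangles, neither of them panchromatic
  have cell : ∀ i ∈ range N, ∀ j ∈ range N,
      (H i (j + 1) - H i j) + (W (i + 1) j - W i j) = 0 := by
    intro i hi j hj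
    obtain ⟨c, hc⟩ := hmiss i (mem_range.1 hi) j (mem_range.1 hj)
    have lower : H i j + W (i + 1) j + door (ℓ i j) (ℓ (i + 1) (j + 1)) = 0 :=
      door_add_door_add_door_eq_zero (hc 0 zero_le_one 0 zero_le_one) (hc 1 le_rfl 0 zero_le_one)
        (hc 1 le_rfl 1 le_rfl)
    have upper : W i j + H i (j + 1) + door (ℓ i j) (ℓ (i + 1) (j + 1)) = 0 :=
      door_add_door_add_door_eq_zero (hc 0 zero_le_one 0 zero_le_one) (hc 0 zero_le_one 1 le_rfl)
        (hc 1 le_rfl 1 le_rfl)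
    linear_combination (norm := ring_nf) lower + upper
    reduce_mod_char
  have bottom : ∑ i ∈ range N, H i 0 = 1 := by
    rw [sum_congr rfl fun i hi => door_eq_sub_of_ne_two (hbot i (mem_range.1 hi).le)
      (hbot (i + 1) (mem_range.1 hi)), sum_range_sub (fun i => ((ℓ i 0 : ℕ) : ZMod 2)),
      eq_one_of_ne_zero_of_ne_two (hright 0 N.zero_le) (hbot N le_rfl),
      eq_zero_of_ne_one_of_ne_two (hleft 0 N.zero_le) (hbot 0 N.zero_le)]
    decide
  have top : ∑ i ∈ range N, H i N = 0 := sum_eq_zero fun i hi =>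
    door_eq_zero_of_ne_zero (htop i (mem_range.1 hi).le) (htop (i + 1) (mem_range.1 hi))
  have left : ∑ j ∈ range N, W 0 j = 0 := sum_eq_zero fun j hj =>
    door_eq_zero_of_ne_one (hleft j (mem_range.1 hj).le) (hleft (j + 1) (mem_range.1 hj))
  have right : ∑ j ∈ range N, W N j = 0 := sum_eq_zero fun j hj =>
    door_eq_zero_of_ne_zero (hright j (mem_range.1 hj).le) (hright (j + 1) (mem_range.1 hj))
  have total : ∑ i ∈ range N, ∑ j ∈ range N,
      ((H i (j + 1) - H i j) + (W (i + 1) j - W i j)) = -1 := by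
    have horiz : ∑ i ∈ range N, ∑ j ∈ range N, (H i (j + 1) - H i j) =
        ∑ i ∈ range N, (H i N - H i 0) := sum_congr rfl fun i _ => sum_range_sub (H i) N
    have vert : ∑ i ∈ range N, ∑ j ∈ range N, (W (i + 1) j - W i j) =
        ∑ j ∈ range N, (W N j - W 0 j) := by
      rw [sum_comm]; exact sum_congr rfl fun j _ => sum_range_sub (W · j) N
    simp only [sum_add_distrib]
    rw [horiz, vert, sum_sub_distrib, sum_sub_distrib, bottom, top, left, right]
    norm_num
  exact absurd (total.symm.trans (sum_eq_zero fun i hi => sum_eq_zero (cell i hi))) (by decide)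

end Sperner

noncomputable def signLabel (x : ℝ × ℝ) : Fin 3 :=
  if 0 < x.1 then 1 else if 0 < x.2 then 2 else 0

lemma signLabel_eq_zero {x : ℝ × ℝ} : signLabel x = 0 ↔ x.1 ≤ 0 ∧ x.2 ≤ 0 := by
  unfold signLabel; split_ifs <;> simp_all

lemma signLabel_eq_one {x : ℝ × ℝ} : signLabel x = 1 ↔ 0 < x.1 := by
  unfold signLabel; split_ifs <;> simp_all

lemma signLabel_eq_two {x : ℝ × ℝ} : signLabel x = 2 ↔ x.1 ≤ 0 ∧ 0 < x.2 := by
  unfold signLabel; split_ifs <;> simp_all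

lemma dist_natCast_div_le {N i a a' : ℕ} (ha : a ≤ 1) (ha' : a' ≤ 1) :
    dist (((i + a : ℕ) : ℝ) / N) (((i + a' : ℕ) : ℝ) / N) ≤ 1 / N := by
  rw [Real.dist_eq, ← sub_div, abs_div, Nat.abs_cast]
  gcongr
  interval_cases a <;> interval_cases a' <;> norm_num

theorem exists_signLabel_triple {F : ℝ × ℝ → ℝ × ℝ}
    (hleft : ∀ p ∈ Icc (0 : ℝ × ℝ) 1, p.1 = 0 → (F p).1 < 0)
    (hright : ∀ p ∈ Icc (0 : ℝ × ℝ) 1, p.1 = 1 → 0 < (F p).1)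
    (hbot : ∀ p ∈ Icc (0 : ℝ × ℝ) 1, p.2 = 0 → (F p).2 < 0)
    (htop : ∀ p ∈ Icc (0 : ℝ × ℝ) 1, p.2 = 1 → 0 < (F p).2) {δ : ℝ} (hδ : 0 < δ) :
    ∃ p ∈ Icc (0 : ℝ × ℝ) 1, ∃ q ∈ Icc (0 : ℝ × ℝ) 1, ∃ r ∈ Icc (0 : ℝ × ℝ) 1,
      dist p q < δ ∧ dist p r < δ ∧
        signLabel (F p) = 0 ∧ signLabel (F q) = 1 ∧ signLabel (F r) = 2 := by
  obtain ⟨n, hn⟩ := exists_nat_one_div_lt hδ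
  rw [← Nat.cast_succ] at hn
  set N := n + 1
  have hN : (0 : ℝ) < N := N.cast_pos.2 n.succ_pos
  let v : ℕ → ℕ → ℝ × ℝ := fun i j => (i / N, j / N)
  have hv : ∀ i ≤ N, ∀ j ≤ N, v i j ∈ Icc 0 1 := fun i hi j hj =>
    ⟨⟨by positivity, by positivity⟩,
      ⟨div_le_one_of_le₀ (by exact_mod_cast hi) hN.le,
        div_le_one_of_le₀ (by exact_mod_cast hj) hN.le⟩⟩
  obtain ⟨i, hi, j, hj, hcell⟩ := Sperner.exists_panchromatic_cell N
    (fun i j => signLabel (F (v i j)))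
    (fun i hi h => (hbot _ (hv i hi 0 N.zero_le) (by simp [v])).not_ge
      (signLabel_eq_two.1 h).2.le)
    (fun i hi h => (htop _ (hv i hi N le_rfl) (by simp [v, hN.ne'])).not_ge
      (signLabel_eq_zero.1 h).2)
    (fun j hj h => (hleft _ (hv 0 N.zero_le j hj) (by simp [v])).not_ge
      (signLabel_eq_one.1 h).le)
    (fun j hj h => (hright _ (hv N le_rfl j hj) (by simp [v, hN.ne'])).not_ge
      (signLabel_eq_zero.1 h).1)
  have corner : ∀ a ≤ 1, ∀ b ≤ 1, v (i + a) (j + b) ∈ Icc 0 1 := fun a ha b hb =>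
    hv _ (by omega) _ (by omega)
  have close : ∀ a ≤ 1, ∀ b ≤ 1, ∀ a' ≤ 1, ∀ b' ≤ 1,
      dist (v (i + a) (j + b)) (v (i + a') (j + b')) < δ := fun a ha b hb a' ha' b' hb' =>
    (max_le (dist_natCast_div_le ha ha') (dist_natCast_div_le hb hb')).trans_lt hn
  obtain ⟨a, ha, b, hb, h0⟩ := hcell 0
  obtain ⟨a₁, ha₁, b₁, hb₁, h1⟩ := hcell 1
  obtain ⟨a₂, ha₂, b₂, hb₂, h2⟩ := hcell 2
  exact ⟨_, corner a ha b hb, _, corner a₁ ha₁ b₁ hb₁, _, corner a₂ ha₂ b₂ hb₂,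
    close a ha b hb a₁ ha₁ b₁ hb₁, close a ha b hb a₂ ha₂ b₂ hb₂, h0, h1, h2⟩

theorem exists_norm_lt_of_boundary_lt {F : ℝ × ℝ → ℝ × ℝ} (hF : ContinuousOn F (Icc 0 1))
    (hleft : ∀ p ∈ Icc (0 : ℝ × ℝ) 1, p.1 = 0 → (F p).1 < 0)
    (hright : ∀ p ∈ Icc (0 : ℝ × ℝ) 1, p.1 = 1 → 0 < (F p).1)
    (hbot : ∀ p ∈ Icc (0 : ℝ × ℝ) 1, p.2 = 0 → (F p).2 < 0)
    (htop : ∀ p ∈ Icc (0 : ℝ × ℝ) 1, p.2 = 1 → 0 < (F p).2) {ε : ℝ} (hε : 0 < ε) :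
    ∃ p ∈ Icc (0 : ℝ × ℝ) 1, ‖F p‖ < ε := by
  obtain ⟨δ, hδ, hFδ⟩ := Metric.uniformContinuousOn_iff.1
    (isCompact_Icc.uniformContinuousOn_of_continuous hF) ε hε
  obtain ⟨p, hp, q, hq, r, hr, hpq, hpr, h0, h1, h2⟩ :=
    exists_signLabel_triple hleft hright hbot htop hδ
  -- each coordinate of `F p` is within `ε` of a value of the opposite sign
  have d₁ := hFδ p hp q hq hpq
  have d₂ := hFδ p hp r hr hpr
  refine ⟨p, hp, ?_⟩
  simp only [signLabel_eq_zero, signLabel_eq_one, signLabel_eq_two] at h0 h1 h2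
  simp only [Prod.dist_eq, max_lt_iff, Real.dist_eq, abs_lt] at d₁ d₂
  simp only [Prod.norm_def, max_lt_iff, Real.norm_eq_abs, abs_lt]
  refine ⟨⟨?_, ?_⟩, ?_, ?_⟩ <;> linarith

theorem exists_norm_lt_of_boundary_le {F : ℝ × ℝ → ℝ × ℝ} (hF : ContinuousOn F (Icc 0 1))
    (hleft : ∀ p ∈ Icc (0 : ℝ × ℝ) 1, p.1 = 0 → (F p).1 ≤ 0)
    (hright : ∀ p ∈ Icc (0 : ℝ × ℝ) 1, p.1 = 1 → 0 ≤ (F p).1)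
    (hbot : ∀ p ∈ Icc (0 : ℝ × ℝ) 1, p.2 = 0 → (F p).2 ≤ 0)
    (htop : ∀ p ∈ Icc (0 : ℝ × ℝ) 1, p.2 = 1 → 0 ≤ (F p).2) {ε : ℝ} (hε : 0 < ε) :
    ∃ p ∈ Icc (0 : ℝ × ℝ) 1, ‖F p‖ < ε := by
  let G : ℝ × ℝ → ℝ × ℝ := fun p =>
    ((F p).1 + ε / 2 * (p.1 - 1 / 2), (F p).2 + ε / 2 * (p.2 - 1 / 2))
  have hG : ContinuousOn G (Icc 0 1) :=
    (hF.fst.add (by fun_prop)).prodMk (hF.snd.add (by fun_prop))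
  obtain ⟨p, hp, hGp⟩ := exists_norm_lt_of_boundary_lt hG
    (fun p hp h => by have := hleft p hp h; simp only [G, h]; linarith)
    (fun p hp h => by have := hright p hp h; simp only [G, h]; linarith)
    (fun p hp h => by have := hbot p hp h; simp only [G, h]; linarith)
    (fun p hp h => by have := htop p hp h; simp only [G, h]; linarith) (half_pos hε)
  refine ⟨p, hp, ?_⟩
  simp only [mem_Icc, Prod.le_def, Prod.fst_zero, Prod.snd_zero, Prod.fst_one, Prod.snd_one] at hp
  simp only [G, Prod.norm_def, max_lt_iff, Real.norm_eq_abs, abs_lt] at hGp ⊢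
  refine ⟨⟨?_, ?_⟩, ?_, ?_⟩ <;> nlinarith

theorem exists_eq_zero_of_boundary_le {F : ℝ × ℝ → ℝ × ℝ} (hF : ContinuousOn F (Icc 0 1))
    (hleft : ∀ p ∈ Icc (0 : ℝ × ℝ) 1, p.1 = 0 → (F p).1 ≤ 0)
    (hright : ∀ p ∈ Icc (0 : ℝ × ℝ) 1, p.1 = 1 → 0 ≤ (F p).1)
    (hbot : ∀ p ∈ Icc (0 : ℝ × ℝ) 1, p.2 = 0 → (F p).2 ≤ 0)
    (htop : ∀ p ∈ Icc (0 : ℝ × ℝ) 1, p.2 = 1 → 0 ≤ (F p).2) :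
    ∃ p ∈ Icc (0 : ℝ × ℝ) 1, F p = 0 := by
  obtain ⟨p, hp, hmin⟩ := isCompact_Icc.exists_isMinOn (nonempty_Icc.2 zero_le_one) hF.norm
  refine ⟨p, hp, norm_eq_zero.1 (le_antisymm ?_ (norm_nonneg _))⟩
  by_contra! hpos
  obtain ⟨q, hq, hlt⟩ := exists_norm_lt_of_boundary_le hF hleft hright hbot htop hpos
  exact (isMinOn_iff.1 hmin q hq).not_gt hlt

theorem exists_eq_of_crossings {a b c d : ℝ} {f g : ℝ → ℝ × ℝ}
    (hf : ContinuousOn f (Icc 0 1)) (hfR : MapsTo f (Icc 0 1) (Icc (a, c) (b, d)))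
    (hf0 : (f 0).1 = a) (hf1 : (f 1).1 = b)
    (hg : ContinuousOn g (Icc 0 1)) (hgR : MapsTo g (Icc 0 1) (Icc (a, c) (b, d)))
    (hg0 : (g 0).2 = c) (hg1 : (g 1).2 = d) :
    ∃ s ∈ Icc (0 : ℝ) 1, ∃ t ∈ Icc (0 : ℝ) 1, f s = g t := by
  have hfst : MapsTo Prod.fst (Icc (0 : ℝ × ℝ) 1) (Icc 0 1) := fun p hp => ⟨hp.1.1, hp.2.1⟩
  have hsnd : MapsTo Prod.snd (Icc (0 : ℝ × ℝ) 1) (Icc 0 1) := fun p hp => ⟨hp.1.2, hp.2.2⟩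
  have hfI : MapsTo (fun p => f p.1) (Icc (0 : ℝ × ℝ) 1) (Icc (a, c) (b, d)) := hfR.comp hfst
  have hgI : MapsTo (fun p => g p.2) (Icc (0 : ℝ × ℝ) 1) (Icc (a, c) (b, d)) := hgR.comp hsnd
  have hf' := hf.comp continuousOn_fst hfst
  have hg' := hg.comp continuousOn_snd hsnd
  obtain ⟨p, hp, hFp⟩ := exists_eq_zero_of_boundary_le
    (F := fun p => ((f p.1).1 - (g p.2).1, (g p.2).2 - (f p.1).2))
    ((hf'.fst.sub hg'.fst).prodMk (hg'.snd.sub hf'.snd))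
    (fun p hp h => by simpa [h, hf0] using (hgI hp).1.1)
    (fun p hp h => by simpa [h, hf1] using (hgI hp).2.1)
    (fun p hp h => by simpa [h, hg0] using (hfI hp).1.2)
    (fun p hp h => by simpa [h, hg1] using (hfI hp).2.2)
  simp only [Prod.ext_iff, Prod.fst_zero, Prod.snd_zero, sub_eq_zero] at hFp
  exact ⟨p.1, hfst hp, p.2, hsnd hp, Prod.ext hFp.1 hFp.2.symm⟩

lemma exists_first_hit {f : ℝ → ℝ} {α β c : ℝ} (hαβ : α ≤ β) (hf : ContinuousOn f (Icc α β))
    (hα : f α ≤ c) (hβ : c ≤ f β) : ∃ s ∈ Icc α β, f s = c ∧ ∀ t ∈ Icc α s, f t ≤ c := by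
  let T := Icc α β ∩ f ⁻¹' Ici c
  have hbdd : BddBelow T := bddBelow_Icc.mono inter_subset_left
  have hsT : sInf T ∈ T := (hf.preimage_isClosed_of_isClosed isClosed_Icc isClosed_Ici).csInf_mem
    ⟨β, ⟨hαβ, le_rfl⟩, hβ⟩ hbdd
  obtain ⟨r, hr, hfr⟩ := intermediate_value_Icc hsT.1.1 (hf.mono (Icc_subset_Icc_right hsT.1.2))
    ⟨hα, hsT.2⟩
  refine ⟨r, ⟨hr.1, hr.2.trans hsT.1.2⟩, hfr, fun t ht => le_of_not_gt fun hlt => hlt.ne' ?_⟩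
  have : sInf T ≤ t := csInf_le hbdd ⟨⟨ht.1, ht.2.trans (hr.2.trans hsT.1.2)⟩, hlt.le⟩
  rwa [le_antisymm ht.2 (hr.2.trans this)]

lemma exists_last_hit {f : ℝ → ℝ} {α β c : ℝ} (hαβ : α ≤ β) (hf : ContinuousOn f (Icc α β))
    (hα : f α ≤ c) (hβ : c ≤ f β) : ∃ s ∈ Icc α β, f s = c ∧ ∀ t ∈ Icc s β, c ≤ f t := by
  let T := Icc α β ∩ f ⁻¹' Iic c
  have hbdd : BddAbove T := bddAbove_Icc.mono inter_subset_left
  have hsT : sSup T ∈ T := (hf.preimage_isClosed_of_isClosed isClosed_Icc isClosed_Iic).csSup_mem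
    ⟨α, ⟨le_rfl, hαβ⟩, hα⟩ hbdd
  obtain ⟨r, hr, hfr⟩ := intermediate_value_Icc hsT.1.2 (hf.mono (Icc_subset_Icc_left hsT.1.1))
    ⟨hsT.2, hβ⟩
  refine ⟨r, ⟨hsT.1.1.trans hr.1, hr.2⟩, hfr, fun t ht => le_of_not_gt fun hlt => hlt.ne ?_⟩
  have : t ≤ sSup T := le_csSup hbdd ⟨⟨hsT.1.1.trans (hr.1.trans ht.1), ht.2⟩, hlt.le⟩
  rwa [le_antisymm (this.trans hr.1) ht.1]

theorem exists_eq_of_reaches_top {a b c d α β : ℝ} {f γ : ℝ → ℝ × ℝ}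
    (hf : ContinuousOn f (Icc 0 1)) (hfR : MapsTo f (Icc 0 1) (Icc (a, c) (b, d)))
    (hf0 : (f 0).1 = a) (hf1 : (f 1).1 = b)
    (hαβ : α ≤ β) (hγ : ContinuousOn γ (Icc α β)) (hγR : MapsTo γ (Icc α β) (Icc a b ×ˢ Iic d))
    (hγα : (γ α).2 ≤ c) (hγβ : (γ β).2 = d) :
    ∃ s ∈ Icc (0 : ℝ) 1, ∃ t ∈ Icc α β, f s = γ t := by
  have hcd : c ≤ d := (hfR ⟨le_rfl, zero_le_one⟩).1.2.trans (hfR ⟨le_rfl, zero_le_one⟩).2.2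
  obtain ⟨s₁, hs₁, hγs₁, above⟩ := exists_last_hit hαβ hγ.snd hγα (hγβ.symm ▸ hcd)
  let σ : ℝ → ℝ := AffineMap.lineMap s₁ β
  have hσ : MapsTo σ (Icc 0 1) (Icc s₁ β) := fun u hu =>
    (convex_Icc s₁ β).lineMap_mem (left_mem_Icc.2 hs₁.2) (right_mem_Icc.2 hs₁.2) hu
  have hσ' : MapsTo σ (Icc 0 1) (Icc α β) := hσ.mono_right (Icc_subset_Icc_left hs₁.1)
  obtain ⟨s, hs, u, hu, hsu⟩ := exists_eq_of_crossings hf hfR hf0 hf1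
    (hγ.comp (AffineMap.lineMap_continuous.continuousOn) hσ')
    (fun u hu => ⟨⟨(hγR (hσ' hu)).1.1, above _ (hσ hu)⟩, (hγR (hσ' hu)).1.2, (hγR (hσ' hu)).2⟩)
    (by simpa [σ] using hγs₁) (by simpa [σ] using hγβ)
  exact ⟨s, hs, σ u, hσ' hu, hsu⟩

lemma mem_Icc_iff_norm_le {p : ℝ × ℝ} {r : ℝ} : p ∈ Icc (-r, -r) (r, r) ↔ ‖p‖ ≤ r := by
  simp only [mem_Icc, Prod.le_def, norm_prod_le_iff, Real.norm_eq_abs, abs_le]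
  tauto

lemma coord_eq_of_norm_eq {p : ℝ × ℝ} {r : ℝ} (h : ‖p‖ = r) :
    p.2 = r ∨ -p.2 = r ∨ -p.1 = r ∨ p.1 = r := by
  rw [Prod.norm_def, Real.norm_eq_abs, Real.norm_eq_abs] at h
  rcases max_choice |p.1| |p.2| with h' | h' <;> rw [h'] at h
  · rcases abs_choice p.1 with h'' | h'' <;> rw [h''] at h <;> tauto
  · rcases abs_choice p.2 with h'' | h'' <;> rw [h''] at h <;> tauto

theorem exists_mem_before_exit {n t₁ : ℝ} {V R : Set (ℝ × ℝ)} {e : ℝ × ℝ → ℝ × ℝ}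
    (he : Isometry e) (he0 : e 0 = 0)
    (hcross : ∃ g : ℝ → ℝ × ℝ, ContinuousOn g (Icc 0 1) ∧ g '' Icc 0 1 ⊆ V ∩ R ∧
      (e (g 0)).1 = -(3 * n) ∧ (e (g 1)).1 = 3 * n)
    (hR : MapsTo e R (Icc (-(3 * n), n) (3 * n, 3 * n)))
    {γ : ℝ → ℝ × ℝ} (ht₁ : 0 ≤ t₁) (hγ : ContinuousOn γ (Icc 0 t₁))
    (hγQ : ∀ t ∈ Icc 0 t₁, ‖γ t‖ ≤ 3 * n) (hγ0 : ‖γ 0‖ ≤ n) (hexit : (e (γ t₁)).2 = 3 * n) :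
    ∃ t ∈ Icc 0 t₁, γ t ∈ V := by
  obtain ⟨g, hg, hgVR, hg0, hg1⟩ := hcross
  have he_norm : ∀ p, ‖e p‖ = ‖p‖ := fun p => by simpa [he0] using he.dist_eq p 0
  have hQ : ∀ p, ‖p‖ ≤ 3 * n → e p ∈ Icc (-(3 * n)) (3 * n) ×ˢ Iic (3 * n) := fun p hp => by
    rw [← he_norm] at hp
    exact ⟨abs_le.1 ((norm_fst_le _).trans hp),
      (Real.le_norm_self _).trans ((norm_snd_le _).trans hp)⟩
  obtain ⟨s, hs, t, ht, hst⟩ := exists_eq_of_reaches_top (he.continuous.comp_continuousOn hg)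
    (fun s hs => hR (hgVR (mem_image_of_mem g hs)).2) hg0 hg1 ht₁
    (he.continuous.comp_continuousOn hγ) (fun t ht => hQ _ (hγQ t ht))
    ((Real.le_norm_self _).trans ((norm_snd_le _).trans ((he_norm _).trans_le hγ0))) hexit
  exact ⟨t, ht, he.injective hst ▸ (hgVR (mem_image_of_mem g hs)).1⟩

theorem annulus_circuit_blocks_general
    (n : ℝ) (V : Set (ℝ × ℝ))
    (hbot : ∃ γ : ℝ → ℝ × ℝ, ContinuousOn γ (Set.Icc 0 1) ∧
      γ '' Set.Icc 0 1 ⊆ V ∩ Set.Icc (-(3 * n), -(3 * n)) (3 * n, -n) ∧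
      (γ 0).1 = -(3 * n) ∧ (γ 1).1 = 3 * n)
    (htop : ∃ γ : ℝ → ℝ × ℝ, ContinuousOn γ (Set.Icc 0 1) ∧
      γ '' Set.Icc 0 1 ⊆ V ∩ Set.Icc (-(3 * n), n) (3 * n, 3 * n) ∧
      (γ 0).1 = -(3 * n) ∧ (γ 1).1 = 3 * n)
    (hleft : ∃ γ : ℝ → ℝ × ℝ, ContinuousOn γ (Set.Icc 0 1) ∧
      γ '' Set.Icc 0 1 ⊆ V ∩ Set.Icc (-(3 * n), -(3 * n)) (-n, 3 * n) ∧
      (γ 0).2 = -(3 * n) ∧ (γ 1).2 = 3 * n)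
    (hright : ∃ γ : ℝ → ℝ × ℝ, ContinuousOn γ (Set.Icc 0 1) ∧
      γ '' Set.Icc 0 1 ⊆ V ∩ Set.Icc (n, -(3 * n)) (3 * n, 3 * n) ∧
      (γ 0).2 = -(3 * n) ∧ (γ 1).2 = 3 * n) :
    ¬ ∃ γ : ℝ → ℝ × ℝ, ContinuousOn γ (Set.Icc 0 1) ∧
      γ '' Set.Icc 0 1 ⊆ Vᶜ ∧
      γ 0 ∈ Set.Icc (-n, -n) (n, n) ∧
      γ 1 ∉ Set.Icc (-(3 * n), -(3 * n)) (3 * n, 3 * n) := by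
  rintro ⟨γ, hγ, hγV, hγ0, hγ1⟩
  rw [mem_Icc_iff_norm_le] at hγ0 hγ1
  obtain ⟨t₁, ht₁, hexit, hin⟩ :=
    exists_first_hit zero_le_one hγ.norm (by linarith [norm_nonneg (γ 0)]) (not_le.1 hγ1).le
  have hγ' := hγ.mono (Icc_subset_Icc_right ht₁.2)
  suffices ∃ t ∈ Icc 0 t₁, γ t ∈ V by
    obtain ⟨t, ht, htV⟩ := this
    exact hγV (mem_image_of_mem γ (Icc_subset_Icc_right ht₁.2 ht)) htV
  rcases coord_eq_of_norm_eq hexit with h | h | h | h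
  · exact exists_mem_before_exit isometry_id rfl htop (fun p hp => hp) ht₁.1 hγ' hin hγ0 h
  · exact exists_mem_before_exit (e := fun p => (p.1, -p.2))
      (.of_dist_eq fun p q => by simp [Prod.dist_eq]) (by simp) hbot
      (fun p ⟨⟨h₁, h₂⟩, h₃, h₄⟩ => ⟨⟨h₁, by dsimp only; linarith⟩, h₃, by dsimp only; linarith⟩)
      ht₁.1 hγ' hin hγ0 h
  · exact exists_mem_before_exit (e := fun p => (p.2, -p.1))
      (.of_dist_eq fun p q => by simp [Prod.dist_eq, max_comm]) (by simp) hleft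
      (fun p ⟨⟨h₁, h₂⟩, h₃, h₄⟩ => ⟨⟨h₂, by dsimp only; linarith⟩, h₄, by dsimp only; linarith⟩)
      ht₁.1 hγ' hin hγ0 h
  · exact exists_mem_before_exit (e := fun p => (p.2, p.1))
      (.of_dist_eq fun p q => by simp [Prod.dist_eq, max_comm]) (by simp) hright
      (fun p ⟨⟨h₁, h₂⟩, h₃, h₄⟩ => ⟨⟨h₂, h₁⟩, h₄, h₃⟩) ht₁.1 hγ' hin hγ0 h

/-- If a set `V ⊆ ℝ²` crosses the long way each of the four rectangles making up the
annulus `[-3n,3n]² \ (-n,n)²`, then there is no continuous path in the complement of `V`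
from the box `[-n,n]²` to the complement of `[-3n,3n]²`. -/
theorem annulus_circuit_blocks
    (n : ℝ) (hn : 0 < n) (V : Set (ℝ × ℝ))
    (hbot : ∃ γ : ℝ → ℝ × ℝ, ContinuousOn γ (Set.Icc 0 1) ∧
      γ '' Set.Icc 0 1 ⊆ V ∩ Set.Icc (-(3 * n), -(3 * n)) (3 * n, -n) ∧
      (γ 0).1 = -(3 * n) ∧ (γ 1).1 = 3 * n)
    (htop : ∃ γ : ℝ → ℝ × ℝ, ContinuousOn γ (Set.Icc 0 1) ∧
      γ '' Set.Icc 0 1 ⊆ V ∩ Set.Icc (-(3 * n), n) (3 * n, 3 * n) ∧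
      (γ 0).1 = -(3 * n) ∧ (γ 1).1 = 3 * n)
    (hleft : ∃ γ : ℝ → ℝ × ℝ, ContinuousOn γ (Set.Icc 0 1) ∧
      γ '' Set.Icc 0 1 ⊆ V ∩ Set.Icc (-(3 * n), -(3 * n)) (-n, 3 * n) ∧
      (γ 0).2 = -(3 * n) ∧ (γ 1).2 = 3 * n)
    (hright : ∃ γ : ℝ → ℝ × ℝ, ContinuousOn γ (Set.Icc 0 1) ∧
      γ '' Set.Icc 0 1 ⊆ V ∩ Set.Icc (n, -(3 * n)) (3 * n, 3 * n) ∧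
      (γ 0).2 = -(3 * n) ∧ (γ 1).2 = 3 * n) :
    ¬ ∃ γ : ℝ → ℝ × ℝ, ContinuousOn γ (Set.Icc 0 1) ∧
      γ '' Set.Icc 0 1 ⊆ Vᶜ ∧
      γ 0 ∈ Set.Icc (-n, -n) (n, n) ∧
      γ 1 ∉ Set.Icc (-(3 * n), -(3 * n)) (3 * n, 3 * n) :=
  annulus_circuit_blocks_general n V hbot htop hleft hright
end

section
/- Let b > 0. For each n ≥ 1 define the rectangle Sₙ ⊆ ℝ² centred at the origin by: Sₙ = [-5·10ⁿb, 5·10ⁿb] × [-10ⁿb/2, 10ⁿb/2] if n is odd (horizontal), and Sₙ = [-10ⁿb/2, 10ⁿb/2] × [-5·10ⁿb, 5·10ⁿb] if n is even (vertical). Let V ⊆ ℝ² and suppose that for each n ≥ 1 there is a continuous path γₙ : [0,1] → Sₙ ∩ V crossing Sₙ the long way (for horizontal Sₙ: γₙ(0) on the left edge and γₙ(1) on the right edge; for vertical Sₙ: γₙ(0) on the bottom edge and γₙ(1) on the top edge). Then the union of the ranges of the γₙ is a connected unbounded subset of V; in particular V has an unbounded connected subset. -/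
/-!
If `f` crosses the rectangle `[-A, A] × [-B, B]` from left to right strictly between its
horizontal sides and `g` crosses it from bottom to top, and `f s ≠ g t` for all `s, t`, then
`(s, t) ↦ f s - g t` is a nonvanishing map on the unit square, hence (the square being simply
connected) has a continuous angle. On the bottom, right, top and left edges the difference lies in
the upper, closed right, lower and closed left half plane respectively, and following the angle
once around the boundary it cannot return to its initial value. Hence the long-way crossing
of `Sₙ` meets that of `Sₙ₊₁` (after exchanging coordinates when `n` is even), so the union of
the crossings is a chain of connected sets, and it is unbounded since `‖γₙ 1‖ ≥ 5·10ⁿ b`.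
-/

open Bornology

/-- The strip `Sₙ` at scale `10ⁿ b`: horizontal (a `10·10ⁿb × 10ⁿb` rectangle centred
at the origin) when `n` is odd, vertical when `n` is even. -/
def strip (b : ℝ) (n : ℕ) : Set (ℝ × ℝ) :=
  if Odd n then
    Set.Icc (-(5 * 10 ^ n * b), -(10 ^ n * b / 2)) (5 * 10 ^ n * b, 10 ^ n * b / 2)
  else
    Set.Icc (-(10 ^ n * b / 2), -(5 * 10 ^ n * b)) (10 ^ n * b / 2, 5 * 10 ^ n * b)

open Set Real

theorem IsPreconnected.apply_mem_Ioo_of_forall_ne {α β : Type*} [TopologicalSpace α]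
    [LinearOrder β] [TopologicalSpace β] [OrderClosedTopology β] {S : Set α}
    (hS : IsPreconnected S) {φ : α → β} (hφ : ContinuousOn φ S) {a b : β}
    (ha : ∀ x ∈ S, φ x ≠ a) (hb : ∀ x ∈ S, φ x ≠ b) {x y : α} (hx : x ∈ S) (hy : y ∈ S)
    (hxab : φ x ∈ Ioo a b) : φ y ∈ Ioo a b := by
  by_contra hy'
  rcases not_and_or.1 hy' with hya | hyb
  · obtain ⟨z, hz, hza⟩ := hS.intermediate_value hy hx hφ ⟨not_lt.1 hya, hxab.1.le⟩
    exact ha z hz hza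
  · obtain ⟨z, hz, hzb⟩ := hS.intermediate_value hx hy hφ ⟨hxab.2.le, not_lt.1 hyb⟩
    exact hb z hz hzb

section SimplyConnected

variable {X : Type*} [TopologicalSpace X] [SimplyConnectedSpace X] [LocallyPathConnectedSpace X]

theorem exists_continuous_exp_eq {w : X → ℂ} (hw : Continuous w) (hw0 : ∀ x, w x ≠ 0)
    (x₀ : X) :
    ∃ θ : X → ℂ, Continuous θ ∧ θ x₀ = Complex.log (w x₀) ∧ ∀ x, Complex.exp (θ x) = w x := by
  obtain ⟨θ, hθ₀, hθ⟩ := (Complex.isCoveringMap_exp.existsUnique_continuousMap_lifts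
    ⟨fun x ↦ ⟨w x, hw0 x⟩, by fun_prop⟩ x₀ (Complex.log (w x₀))
    (Subtype.ext (Complex.exp_log (hw0 x₀)))).exists
  exact ⟨θ, θ.continuous, hθ₀, fun x ↦ congrArg Subtype.val (congrFun hθ x)⟩

theorem exists_continuous_polar_angle {v : X → ℝ × ℝ} (hv : Continuous v) (hv0 : ∀ x, v x ≠ 0)
    (x₀ : X) :
    ∃ φ : X → ℝ, Continuous φ ∧ φ x₀ ∈ Ioc (-π) π ∧
      ∀ x, ∃ r > 0, v x = (r * cos (φ x), r * sin (φ x)) := by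
  set w : X → ℂ := fun x ↦ Complex.equivRealProdCLM.symm (v x)
  obtain ⟨θ, hθ, hθ₀, hexp⟩ := exists_continuous_exp_eq (w := w) (by fun_prop)
    (fun x ↦ by simpa [w] using hv0 x) x₀
  refine ⟨fun x ↦ (θ x).im, by fun_prop, ?_, fun x ↦ ⟨exp (θ x).re, exp_pos _, ?_⟩⟩
  · simp only [hθ₀, Complex.log_im]
    exact ⟨Complex.neg_pi_lt_arg _, Complex.arg_le_pi _⟩
  · rw [← Complex.exp_re, ← Complex.exp_im, hexp]
    simp [w]

end SimplyConnected

theorem false_of_sin_cos_signs_on_square_boundary {φ : ℝ × ℝ → ℝ} (hφ : Continuous φ)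
    (hφ₀ : φ (0, 0) ∈ Ioc (-π) π)
    (hbot : ∀ s ∈ Icc (0 : ℝ) 1, 0 < sin (φ (s, 0)))
    (htop : ∀ s ∈ Icc (0 : ℝ) 1, sin (φ (s, 1)) < 0)
    (hleft : ∀ t ∈ Icc (0 : ℝ) 1, cos (φ (0, t)) ≤ 0)
    (hright : ∀ t ∈ Icc (0 : ℝ) 1, 0 ≤ cos (φ (1, t))) : False := by
  have h0 : (0 : ℝ) ∈ Icc (0 : ℝ) 1 := left_mem_Icc.2 zero_le_one
  have h1 : (1 : ℝ) ∈ Icc (0 : ℝ) 1 := right_mem_Icc.2 zero_le_one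
  have edge (ψ : ℝ → ℝ) (hψ : Continuous ψ) {a b : ℝ} (ha : ∀ x ∈ Icc (0 : ℝ) 1, ψ x ≠ a)
      (hb : ∀ x ∈ Icc (0 : ℝ) 1, ψ x ≠ b) {x y : ℝ} (hx : x ∈ Icc (0 : ℝ) 1)
      (hy : y ∈ Icc (0 : ℝ) 1) (h : ψ x ∈ Ioo a b) : ψ y ∈ Ioo a b :=
    isPreconnected_Icc.apply_mem_Ioo_of_forall_ne hψ.continuousOn ha hb hx hy h
  -- Going counterclockwise from `(0, 0)`, each edge traps `φ` between two values at which its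
  -- sign condition fails; the left edge then brings `φ (0, 0)` below `0`.
  have hA : φ (0, 0) ∈ Ioo 0 π :=
    ⟨not_le.1 fun h ↦ (hbot 0 h0).not_ge (sin_nonpos_of_nonpos_of_neg_pi_le h hφ₀.1.le),
      hφ₀.2.lt_of_ne fun h ↦ by simpa [h] using hbot 0 h0⟩
  have hB : φ (1, 0) ∈ Ioo 0 π :=
    edge (fun s ↦ φ (s, 0)) (by fun_prop) (fun s hs h ↦ by simpa [h] using hbot s hs)
      (fun s hs h ↦ by simpa [h] using hbot s hs) h0 h1 hA
  have hC : φ (1, 1) ∈ Ioo (-π) π :=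
    edge (fun t ↦ φ (1, t)) (by fun_prop)
      (fun t ht h ↦ (hright t ht).not_gt (by simp [h]))
      (fun t ht h ↦ (hright t ht).not_gt (by simp [h])) h0 h1
      ⟨by linarith [hB.1, pi_pos], hB.2⟩
  have hC' : φ (1, 1) ∈ Ioo (-π) 0 :=
    ⟨hC.1, not_le.1 fun h ↦ (htop 1 h1).not_ge (sin_nonneg_of_nonneg_of_le_pi h hC.2.le)⟩
  have hD : φ (0, 1) ∈ Ioo (-π) 0 :=
    edge (fun s ↦ φ (s, 1)) (by fun_prop) (fun s hs h ↦ by simpa [h] using htop s hs)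
      (fun s hs h ↦ by simpa [h] using htop s hs) h1 h0 hC'
  have hA' : φ (0, 0) ∈ Ioo (-(2 * π)) 0 :=
    edge (fun t ↦ φ (0, t)) (by fun_prop)
      (fun t ht h ↦ (hleft t ht).not_gt (by simp [h]))
      (fun t ht h ↦ (hleft t ht).not_gt (by simp [h])) h1 h0
      ⟨by linarith [hD.1, pi_pos], hD.2⟩
  exact hA.1.not_gt hA'.2

theorem exists_eq_zero_of_signs_on_square_boundary {v : ℝ × ℝ → ℝ × ℝ} (hv : Continuous v)
    (hbot : ∀ s ∈ Icc (0 : ℝ) 1, 0 < (v (s, 0)).2)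
    (htop : ∀ s ∈ Icc (0 : ℝ) 1, (v (s, 1)).2 < 0)
    (hleft : ∀ t ∈ Icc (0 : ℝ) 1, (v (0, t)).1 ≤ 0)
    (hright : ∀ t ∈ Icc (0 : ℝ) 1, 0 ≤ (v (1, t)).1) :
    ∃ p, v p = 0 := by
  by_contra! hv0
  obtain ⟨φ, hφ, hφ₀, hpolar⟩ := exists_continuous_polar_angle hv hv0 (0, 0)
  choose r hr hv_eq using hpolar
  refine false_of_sin_cos_signs_on_square_boundary hφ hφ₀ (fun s hs ↦ ?_) (fun s hs ↦ ?_)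
    (fun t ht ↦ ?_) (fun t ht ↦ ?_)
  · have h := hbot s hs
    rw [hv_eq] at h
    exact pos_of_mul_pos_right h (hr _).le
  · have h := htop s hs
    rw [hv_eq] at h
    exact neg_of_mul_neg_right h (hr _).le
  · have h := hleft t ht
    rw [hv_eq] at h
    exact nonpos_of_mul_nonpos_right h (hr _)
  · have h := hright t ht
    rw [hv_eq] at h
    exact nonneg_of_mul_nonneg_right h (hr _)

theorem exists_eq_of_perpendicular_crossings {A B : ℝ} {f g : ℝ → ℝ × ℝ}
    (hf : ContinuousOn f (Icc 0 1)) (hg : ContinuousOn g (Icc 0 1))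
    (hf0 : (f 0).1 = -A) (hf1 : (f 1).1 = A) (hf2 : ∀ s ∈ Icc (0 : ℝ) 1, |(f s).2| < B)
    (hg0 : (g 0).2 = -B) (hg1 : (g 1).2 = B) (hg2 : ∀ t ∈ Icc (0 : ℝ) 1, |(g t).1| ≤ A) :
    ∃ s ∈ Icc (0 : ℝ) 1, ∃ t ∈ Icc (0 : ℝ) 1, f s = g t := by
  set P := projIcc (0 : ℝ) 1 zero_le_one
  have hP : Continuous fun s ↦ (P s : ℝ) := continuous_subtype_val.comp continuous_projIcc
  have hfP : Continuous fun s ↦ f (P s) := hf.comp_continuous hP fun s ↦ (P s).2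
  have hgP : Continuous fun t ↦ g (P t) := hg.comp_continuous hP fun t ↦ (P t).2
  have hPs {s : ℝ} (hs : s ∈ Icc (0 : ℝ) 1) : (P s : ℝ) = s := by simp [P, projIcc_of_mem _ hs]
  have h0 : (0 : ℝ) ∈ Icc (0 : ℝ) 1 := left_mem_Icc.2 zero_le_one
  have h1 : (1 : ℝ) ∈ Icc (0 : ℝ) 1 := right_mem_Icc.2 zero_le_one
  obtain ⟨⟨s, t⟩, hst⟩ := exists_eq_zero_of_signs_on_square_boundary
    (v := fun p ↦ f (P p.1) - g (P p.2)) ((hfP.comp continuous_fst).sub (hgP.comp continuous_snd))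
    (fun s hs ↦ by simp [hPs hs, hPs h0, hg0]; linarith [(abs_lt.1 (hf2 s hs)).1])
    (fun s hs ↦ by simp [hPs hs, hPs h1, hg1]; linarith [(abs_lt.1 (hf2 s hs)).2])
    (fun t ht ↦ by simp [hPs ht, hPs h0, hf0]; linarith [(abs_le.1 (hg2 t ht)).1])
    (fun t ht ↦ by simp [hPs ht, hPs h1, hf1]; linarith [(abs_le.1 (hg2 t ht)).2])
  exact ⟨P s, (P s).2, P t, (P t).2, by simpa [sub_eq_zero] using hst⟩

theorem mem_Icc_neg_iff_abs_le {α : Type*} [AddCommGroup α] [LinearOrder α]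
    [IsOrderedAddMonoid α] {a c : α} {p : α × α} :
    p ∈ Icc (-a, -c) (a, c) ↔ |p.1| ≤ a ∧ |p.2| ≤ c := by
  simp only [mem_Icc, Prod.le_def, abs_le]
  tauto

theorem abs_le_of_mem_strip_of_odd {b : ℝ} {n : ℕ} (hn : Odd n) {p : ℝ × ℝ}
    (hp : p ∈ strip b n) : |p.1| ≤ 5 * 10 ^ n * b ∧ |p.2| ≤ 10 ^ n * b / 2 := by
  rwa [strip, if_pos hn, mem_Icc_neg_iff_abs_le] at hp

theorem abs_le_of_mem_strip_of_even {b : ℝ} {n : ℕ} (hn : Even n) {p : ℝ × ℝ}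
    (hp : p ∈ strip b n) : |p.1| ≤ 10 ^ n * b / 2 ∧ |p.2| ≤ 5 * 10 ^ n * b := by
  rwa [strip, if_neg (Nat.not_odd_iff_even.2 hn), mem_Icc_neg_iff_abs_le] at hp

def CrossesStripLongWay (b : ℝ) (n : ℕ) (c : ℝ → ℝ × ℝ) : Prop :=
  ContinuousOn c (Icc 0 1) ∧ MapsTo c (Icc 0 1) (strip b n) ∧
    if Odd n then (c 0).1 = -(5 * 10 ^ n * b) ∧ (c 1).1 = 5 * 10 ^ n * b
    else (c 0).2 = -(5 * 10 ^ n * b) ∧ (c 1).2 = 5 * 10 ^ n * b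

namespace CrossesStripLongWay

variable {b : ℝ} {n : ℕ} {c c' : ℝ → ℝ × ℝ}

theorem le_norm_apply_one (h : CrossesStripLongWay b n c) : 5 * 10 ^ n * b ≤ ‖c 1‖ := by
  obtain ⟨-, -, hends⟩ := h
  split_ifs at hends
  · exact (le_abs_self _).trans (hends.2 ▸ norm_fst_le (c 1))
  · exact (le_abs_self _).trans (hends.2 ▸ norm_snd_le (c 1))

theorem exists_eq_of_succ (hb : 0 < b) (h : CrossesStripLongWay b n c)
    (h' : CrossesStripLongWay b (n + 1) c') :
    ∃ s ∈ Icc (0 : ℝ) 1, ∃ t ∈ Icc (0 : ℝ) 1, c s = c' t := by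
  obtain ⟨hc, hcS, hends⟩ := h
  obtain ⟨hc', hcS', hends'⟩ := h'
  have hlt : 10 ^ n * b / 2 < 5 * 10 ^ (n + 1) * b := by
    rw [pow_succ]; nlinarith [pow_pos (by norm_num : (0 : ℝ) < 10) n]
  have hwidth : 10 ^ (n + 1) * b / 2 = 5 * 10 ^ n * b := by rw [pow_succ]; ring
  rcases Nat.even_or_odd n with hn | hn
  · rw [if_neg (Nat.not_odd_iff_even.2 hn)] at hends
    rw [if_pos hn.add_one] at hends'
    obtain ⟨s, hs, t, ht, hst⟩ := exists_eq_of_perpendicular_crossings (f := Prod.swap ∘ c)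
      (g := Prod.swap ∘ c') (continuous_swap.comp_continuousOn hc)
      (continuous_swap.comp_continuousOn hc') hends.1 hends.2
      (fun s hs ↦ (abs_le_of_mem_strip_of_even hn (hcS hs)).1.trans_lt hlt) hends'.1 hends'.2
      (fun t ht ↦ hwidth ▸ (abs_le_of_mem_strip_of_odd hn.add_one (hcS' ht)).2)
    exact ⟨s, hs, t, ht, Prod.swap_injective hst⟩
  · rw [if_pos hn] at hends
    rw [if_neg (Nat.not_odd_iff_even.2 hn.add_one)] at hends'
    exact exists_eq_of_perpendicular_crossings hc hc' hends.1 hends.2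
      (fun s hs ↦ (abs_le_of_mem_strip_of_odd hn (hcS hs)).2.trans_lt hlt) hends'.1 hends'.2
      (fun t ht ↦ hwidth ▸ (abs_le_of_mem_strip_of_even hn.add_one (hcS' ht)).1)

end CrossesStripLongWay

/-- If `V ⊆ ℝ²` contains, for every `n ≥ 1`, a long-way crossing `γₙ` of the strip `Sₙ`
(alternating horizontal/vertical, with lengths growing like `10ⁿ b`), then the union of
the ranges of the `γₙ` is a connected unbounded subset of `V`. -/
theorem union_of_strip_crossings_unbounded_connected
    (b : ℝ) (hb : 0 < b) (V : Set (ℝ × ℝ)) (γ : ℕ → ℝ → ℝ × ℝ)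
    (hc : ∀ n, 1 ≤ n → ContinuousOn (γ n) (Set.Icc 0 1))
    (hr : ∀ n, 1 ≤ n → γ n '' Set.Icc 0 1 ⊆ strip b n ∩ V)
    (hodd : ∀ n, 1 ≤ n → Odd n →
      (γ n 0).1 = -(5 * 10 ^ n * b) ∧ (γ n 1).1 = 5 * 10 ^ n * b)
    (heven : ∀ n, 1 ≤ n → Even n →
      (γ n 0).2 = -(5 * 10 ^ n * b) ∧ (γ n 1).2 = 5 * 10 ^ n * b) :
    IsConnected (⋃ n : ℕ, γ (n + 1) '' Set.Icc 0 1) ∧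
      ¬ IsBounded (⋃ n : ℕ, γ (n + 1) '' Set.Icc 0 1) ∧
      (⋃ n : ℕ, γ (n + 1) '' Set.Icc 0 1) ⊆ V := by
  have h1 (n : ℕ) : 1 ≤ n + 1 := Nat.le_add_left 1 n
  have hγ (n : ℕ) : CrossesStripLongWay b (n + 1) (γ (n + 1)) := by
    refine ⟨hc _ (h1 n), fun s hs ↦ (hr _ (h1 n) (mem_image_of_mem _ hs)).1, ?_⟩
    split_ifs with hn
    exacts [hodd _ (h1 n) hn, heven _ (h1 n) (Nat.not_odd_iff_even.1 hn)]
  refine ⟨?_, ?_, iUnion_subset fun n ↦ (hr _ (h1 n)).trans inter_subset_right⟩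
  · refine IsConnected.iUnion_of_chain
      (fun n ↦ (isConnected_Icc zero_le_one).image _ (hγ n).1) fun n ↦ ?_
    obtain ⟨s, hs, t, ht, hst⟩ := (hγ n).exists_eq_of_succ hb (hγ (n + 1))
    exact ⟨γ (n + 1) s, mem_image_of_mem _ hs, hst ▸ mem_image_of_mem _ ht⟩
  · intro hbdd
    obtain ⟨C, hC⟩ := isBounded_iff_forall_norm_le.1 hbdd
    obtain ⟨n, hn⟩ := pow_unbounded_of_one_lt (C / (5 * b)) (by norm_num : (1 : ℝ) < 10)
    have hCn := hC _ (mem_iUnion_of_mem n (mem_image_of_mem _ (right_mem_Icc.2 zero_le_one)))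
    have hpow : (10 : ℝ) ^ n ≤ 10 ^ (n + 1) := pow_le_pow_right₀ (by norm_num) n.le_succ
    rw [div_lt_iff₀ (by positivity)] at hn
    nlinarith [(hγ n).le_norm_apply_one]
end
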